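/- Let i : A → B be an induced subgraph inclusion that is a ×-homotopy equivalence, let v ∈ V(B) ∖ V(A) be a vertex of B admitting a fold map f : B → B − v (so that this fold is a relative fold in B with respect to A), and let j : A → B − v be the induced subgraph inclusion. Then for every graph map α : A → X, the cobase change of j along α is a ×-homotopy equivalence if and only if the cobase change of i along α is a ×-homotopy equivalence. -/

import Mathlib

/-- A graph: vertex type `V` with a symmetric adjacency relation; loops are allowed. -/
structure LGraph (V : Type) : Type where
  adj : V → V → Prop
  symm : ∀ {x y : V}, adj x y → adj y x

/-- A graph map: a vertex function preserving edges. -/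
def IsGraphHom {V W : Type} (G : LGraph V) (H : LGraph W) (f : V → W) : Prop :=
  ∀ ⦃x y : V⦄, G.adj x y → H.adj (f x) (f y)

/-- The categorical product of graphs. -/
def LGraph.prod {V W : Type} (G : LGraph V) (H : LGraph W) : LGraph (V × W) where
  adj p q := G.adj p.1 q.1 ∧ H.adj p.2 q.2
  symm h := ⟨G.symm h.1, H.symm h.2⟩

/-- The graph `I_n` on vertices `{0,…,n}` with `i ~ j` iff `|i-j| ≤ 1` (all vertices looped). -/
def pathI (n : ℕ) : LGraph (Fin (n + 1)) where
  adj i j := (i : ℕ) ≤ (j : ℕ) + 1 ∧ (j : ℕ) ≤ (i : ℕ) + 1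
  symm h := ⟨h.2, h.1⟩

/-- `f` and `g` are ×-homotopic. -/
def Homotopic {V W : Type} (G : LGraph V) (H : LGraph W) (f g : V → W) : Prop :=
  ∃ (n : ℕ) (F : V × Fin (n + 1) → W),
    IsGraphHom (G.prod (pathI n)) H F ∧ (∀ a, F (a, 0) = f a) ∧ (∀ a, F (a, Fin.last n) = g a)

/-- `f` is a ×-homotopy equivalence. -/
def IsHtpyEquiv {V W : Type} (G : LGraph V) (H : LGraph W) (f : V → W) : Prop :=
  IsGraphHom G H f ∧ ∃ g : W → V, IsGraphHom H G g ∧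
    Homotopic G G (g ∘ f) id ∧ Homotopic H H (f ∘ g) id

/-- A graph is connected if any two vertices are joined by a path of edges. -/
def LGraph.Connected {V : Type} (G : LGraph V) : Prop :=
  ∀ x y : V, Relation.ReflTransGen G.adj x y

/-- `i : A → B` is an unfold: an induced-subgraph inclusion adding exactly one new vertex `v`
with `N(v) ⊆ N(i v')` for some vertex `v'` of `A`. -/
def IsUnfold {A B : Type} (GA : LGraph A) (GB : LGraph B) (i : A → B) : Prop :=
  Function.Injective i ∧ (∀ x y : A, GA.adj x y ↔ GB.adj (i x) (i y)) ∧
  ∃ v : B, v ∉ Set.range i ∧ (∀ b : B, b ∉ Set.range i → b = v) ∧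
    ∃ v' : A, ∀ b : B, GB.adj v b → GB.adj (i v') b

/-- Relation generating the pushout of `i : A → B` along `f : A → C`. -/
def pushoutRel {A B C : Type} (i : A → B) (f : A → C) : B ⊕ C → B ⊕ C → Prop :=
  fun x y => ∃ a : A, x = Sum.inl (i a) ∧ y = Sum.inr (f a)

/-- Vertex set of the pushout. -/
def Pushout {A B C : Type} (i : A → B) (f : A → C) : Type :=
  Quot (pushoutRel i f)

/-- Adjacency on a disjoint union. -/
def sumAdj {B C : Type} (GB : LGraph B) (GC : LGraph C) (x y : B ⊕ C) : Prop :=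
  (∃ b b', x = Sum.inl b ∧ y = Sum.inl b' ∧ GB.adj b b') ∨
  (∃ c c', x = Sum.inr c ∧ y = Sum.inr c' ∧ GC.adj c c')

/-- The pushout graph of `i : A → B` along `f : A → C`: classes are adjacent iff some
representatives are adjacent in `B` or in `C`. -/
def pushoutGraph {A B C : Type} (GB : LGraph B) (GC : LGraph C) (i : A → B) (f : A → C) :
    LGraph (Pushout i f) where
  adj x y := ∃ u v : B ⊕ C,
    Quot.mk (pushoutRel i f) u = x ∧ Quot.mk (pushoutRel i f) v = y ∧ sumAdj GB GC u v
  symm := by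
    rintro x y ⟨u, v, hu, hv, h⟩
    refine ⟨v, u, hv, hu, ?_⟩
    rcases h with ⟨b, b', rfl, rfl, hbb⟩ | ⟨c, c', rfl, rfl, hcc⟩
    · exact Or.inl ⟨b', b, rfl, rfl, GB.symm hbb⟩
    · exact Or.inr ⟨c', c, rfl, rfl, GC.symm hcc⟩

/-- The cobase change `C → B ⊔_A C` of `i` along `f`. -/
def cobase {A B C : Type} (i : A → B) (f : A → C) : C → Pushout i f :=
  fun c => Quot.mk (pushoutRel i f) (Sum.inr c)

/-- The map `a ↦ (a,0)` into the cylinder `A × I_n`. -/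
def cyl0 {A : Type} (n : ℕ) : A → A × Fin (n + 1) := fun a => (a, 0)

/-- The canonical map `(A × I_n) ⊔_i B → B × I_n`, induced by `(a,t) ↦ (i a, t)`, `b ↦ (b,0)`. -/
def cylJ {A B : Type} (i : A → B) (n : ℕ) : Pushout (cyl0 (A := A) n) i → B × Fin (n + 1) :=
  Quot.lift (Sum.elim (fun p => (i p.1, p.2)) (fun b => (b, (0 : Fin (n + 1)))))
    (by rintro x y ⟨a, rfl, rfl⟩; rfl)

/-- `i : A → B` has the homotopy extension property for homotopies of length `n`. -/
def HEP {A B : Type} (GA : LGraph A) (GB : LGraph B) (i : A → B) (n : ℕ) : Prop :=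
  ∀ (Z : Type) (GZ : LGraph Z) (f : A → Z) (g : B → Z),
    IsGraphHom GA GZ f → IsGraphHom GB GZ g → (∀ a, g (i a) = f a) →
    ∀ F : A × Fin (n + 1) → Z, IsGraphHom (GA.prod (pathI n)) GZ F → (∀ a, F (a, 0) = f a) →
    ∃ G : B × Fin (n + 1) → Z, IsGraphHom (GB.prod (pathI n)) GZ G ∧
      (∀ b, G (b, 0) = g b) ∧ (∀ a t, G (i a, t) = F (a, t))

/-- `FoldsTo G S`: the graph `G` can be reduced by a finite sequence of folds to the
induced subgraph on the vertex set `S`. -/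
inductive FoldsTo {V : Type} (G : LGraph V) : Set V → Prop
  | univ : FoldsTo G Set.univ
  | step {S : Set V} {v v' : V} : FoldsTo G S → v ∈ S → v' ∈ S → v ≠ v' →
      (∀ x ∈ S, G.adj v x → G.adj v' x) → FoldsTo G (S \ {v})

/-- `RelFoldsTo G A S`: `G` can be reduced to the induced subgraph on `S` by a finite
sequence of folds relative to `A` (never removing a vertex of `A`). -/
inductive RelFoldsTo {V : Type} (G : LGraph V) (A : Set V) : Set V → Prop
  | univ : RelFoldsTo G A Set.univ
  | step {S : Set V} {v v' : V} : RelFoldsTo G A S → v ∈ S → v ∉ A → v' ∈ S → v ≠ v' →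
      (∀ x ∈ S, G.adj v x → G.adj v' x) → RelFoldsTo G A (S \ {v})

/-- `p : X → Y` has the right lifting property with respect to every unfold. -/
def RLPunfolds {X Y : Type} (GX : LGraph X) (GY : LGraph Y) (p : X → Y) : Prop :=
  ∀ (A B : Type) (GA : LGraph A) (GB : LGraph B) (i : A → B), IsUnfold GA GB i →
    ∀ (f : A → X) (g : B → Y), IsGraphHom GA GX f → IsGraphHom GB GY g →
      (∀ a, p (f a) = g (i a)) →
      ∃ h : B → X, IsGraphHom GB GX h ∧ (∀ a, h (i a) = f a) ∧ ∀ b, p (h b) = g b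

/-- The graph `L_n`: the path `0 - 1 - ⋯ - n` with a loop at `0`. -/
def Lgraph (t : ℕ) : LGraph (Fin (t + 1)) where
  adj x y := ((x : ℕ) + 1 = (y : ℕ) ∨ (y : ℕ) + 1 = (x : ℕ)) ∨ ((x : ℕ) = 0 ∧ (y : ℕ) = 0)
  symm := by tauto

/-- The graph `I_0`: a single looped vertex. -/
def I0 : LGraph Unit where
  adj _ _ := True
  symm h := h

/-- The constant graph map `p_n : L_n → I_0`. -/
def pL (n : ℕ) : Fin (n + 1) → Unit := fun _ => ()

/-- An object of the category of finite graphs. -/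
structure FinGraph : Type where
  n : ℕ
  G : LGraph (Fin n)

/-- A class of morphisms in the category of finite graphs. -/
def MorClass : Type :=
  ∀ (A B : FinGraph), (Fin A.n → Fin B.n) → Prop

/-- `f : A → B` is a retract of `g : X → Y` in the arrow category. -/
def IsRetractOf (A B X Y : FinGraph) (f : Fin A.n → Fin B.n) (g : Fin X.n → Fin Y.n) : Prop :=
  ∃ (iA : Fin A.n → Fin X.n) (rA : Fin X.n → Fin A.n)
    (iB : Fin B.n → Fin Y.n) (rB : Fin Y.n → Fin B.n),
    IsGraphHom A.G X.G iA ∧ IsGraphHom X.G A.G rA ∧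
    IsGraphHom B.G Y.G iB ∧ IsGraphHom Y.G B.G rB ∧
    (∀ a, rA (iA a) = a) ∧ (∀ b, rB (iB b) = b) ∧
    (∀ a, g (iA a) = iB (f a)) ∧ (∀ x, f (rA x) = rB (g x))

/-- A class of morphisms is closed under retracts. -/
def RetractClosed (S : MorClass) : Prop :=
  ∀ (A B X Y : FinGraph) (f : Fin A.n → Fin B.n) (g : Fin X.n → Fin Y.n),
    IsGraphHom A.G B.G f → IsGraphHom X.G Y.G g →
    IsRetractOf A B X Y f g → S X Y g → S A B f

/-- `i` has the left lifting property with respect to `p` (in the category of finite graphs). -/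
def HasLift (A B X Y : FinGraph) (i : Fin A.n → Fin B.n) (p : Fin X.n → Fin Y.n) : Prop :=
  ∀ (f : Fin A.n → Fin X.n) (g : Fin B.n → Fin Y.n),
    IsGraphHom A.G X.G f → IsGraphHom B.G Y.G g → (∀ a, p (f a) = g (i a)) →
    ∃ h : Fin B.n → Fin X.n, IsGraphHom B.G X.G h ∧ (∀ a, h (i a) = f a) ∧ ∀ b, p (h b) = g b

/-- A model structure on the category of finite graphs: classes `W`, `Cof`, `Fib` of graph maps,
each closed under retracts, with two-out-of-three for `W`, the lifting axioms, and the two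
factorization axioms. -/
structure ModelStructure (W Cof Fib : MorClass) : Prop where
  w_hom : ∀ A B f, W A B f → IsGraphHom A.G B.G f
  c_hom : ∀ A B f, Cof A B f → IsGraphHom A.G B.G f
  f_hom : ∀ A B f, Fib A B f → IsGraphHom A.G B.G f
  w_retract : RetractClosed W
  c_retract : RetractClosed Cof
  f_retract : RetractClosed Fib
  two_of_three_comp : ∀ (A B D : FinGraph) (f : Fin A.n → Fin B.n) (g : Fin B.n → Fin D.n),
    IsGraphHom A.G B.G f → IsGraphHom B.G D.G g → W A B f → W B D g → W A D (g ∘ f)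
  two_of_three_right : ∀ (A B D : FinGraph) (f : Fin A.n → Fin B.n) (g : Fin B.n → Fin D.n),
    IsGraphHom A.G B.G f → IsGraphHom B.G D.G g → W A B f → W A D (g ∘ f) → W B D g
  two_of_three_left : ∀ (A B D : FinGraph) (f : Fin A.n → Fin B.n) (g : Fin B.n → Fin D.n),
    IsGraphHom A.G B.G f → IsGraphHom B.G D.G g → W B D g → W A D (g ∘ f) → W A B f
  lift_cw_f : ∀ (A B X Y : FinGraph) (i : Fin A.n → Fin B.n) (p : Fin X.n → Fin Y.n),
    Cof A B i → W A B i → Fib X Y p → HasLift A B X Y i p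
  lift_c_fw : ∀ (A B X Y : FinGraph) (i : Fin A.n → Fin B.n) (p : Fin X.n → Fin Y.n),
    Cof A B i → Fib X Y p → W X Y p → HasLift A B X Y i p
  fact_c_fw : ∀ (A B : FinGraph) (f : Fin A.n → Fin B.n), IsGraphHom A.G B.G f →
    ∃ (Z : FinGraph) (c : Fin A.n → Fin Z.n) (p : Fin Z.n → Fin B.n),
      Cof A Z c ∧ Fib Z B p ∧ W Z B p ∧ ∀ a, p (c a) = f a
  fact_cw_f : ∀ (A B : FinGraph) (f : Fin A.n → Fin B.n), IsGraphHom A.G B.G f →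
    ∃ (Z : FinGraph) (c : Fin A.n → Fin Z.n) (p : Fin Z.n → Fin B.n),
      Cof A Z c ∧ W A Z c ∧ Fib Z B p ∧ ∀ a, p (c a) = f a

/-- The class of ×-homotopy equivalences of finite graphs. -/
def Whe : MorClass := fun A B f => IsHtpyEquiv A.G B.G f

/-- The induced subgraph of `G` on the complement of the vertex `v`. -/
def LGraph.delete {V : Type} (G : LGraph V) (v : V) : LGraph {b : V // b ≠ v} where
  adj x y := G.adj x.1 y.1
  symm h := G.symm h


/-!
Folding `v` onto `v''` is a graph map `B → B - v` fixing `A`, so it induces a map `φ` from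
`B ⊔_A X` to `(B - v) ⊔_A X` with `φ ∘ cobase i = cobase j`. The inclusion `ψ` back is a section
of `φ`, and `ψ ∘ φ` sends every vertex to one with at least its neighbours, so it is homotopic to
the identity in a single step. Hence `φ` is a ×-homotopy equivalence, and a map followed by a
×-homotopy equivalence is one iff the map itself is.
-/

section Homotopy

variable {V W U : Type} {G : LGraph V} {H : LGraph W} {K : LGraph U}

/-- In this form homotopies concatenate and reverse without any `Fin` bookkeeping. -/
theorem homotopic_iff_exists_nat {f g : V → W} :
    Homotopic G H f g ↔ ∃ (n : ℕ) (F : ℕ → V → W),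
      (∀ s t, s ≤ t + 1 → t ≤ s + 1 → ∀ ⦃a a'⦄, G.adj a a' → H.adj (F s a) (F t a')) ∧
        F 0 = f ∧ ∀ t, n ≤ t → F t = g := by
  constructor
  · rintro ⟨n, F, hF, hF0, hF1⟩
    refine ⟨n, fun t a => F (a, ⟨min t n, by omega⟩), ?_, funext fun a => ?_, fun t ht => ?_⟩
    · intro s t hst hts a a' ha
      exact hF ⟨ha, by simp only [pathI]; omega⟩
    · simpa using hF0 a
    · funext a
      simpa [Fin.last, min_eq_right ht] using hF1 a
  · rintro ⟨n, F, hF, hF0, hF1⟩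
    exact ⟨n, fun p => F p.2 p.1, fun p q h => hF _ _ h.2.1 h.2.2 h.1,
      fun a => congrFun hF0 a, fun a => congrFun (hF1 n le_rfl) a⟩

theorem Homotopic.symm {f g : V → W} (h : Homotopic G H f g) : Homotopic G H g f := by
  obtain ⟨n, F, hF, hF0, hF1⟩ := homotopic_iff_exists_nat.1 h
  refine homotopic_iff_exists_nat.2 ⟨n, fun t => F (n - t), ?_, by simpa using hF1 n le_rfl, ?_⟩
  · intro s t hst hts
    exact hF _ _ (by omega) (by omega)
  · intro t ht
    simp [Nat.sub_eq_zero_of_le ht, hF0]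

theorem Homotopic.trans {f g k : V → W} (h₁ : Homotopic G H f g) (h₂ : Homotopic G H g k) :
    Homotopic G H f k := by
  obtain ⟨n, F, hF, hF0, hF1⟩ := homotopic_iff_exists_nat.1 h₁
  obtain ⟨m, F', hF', hF'0, hF'1⟩ := homotopic_iff_exists_nat.1 h₂
  set L : ℕ → V → W := fun t => if t ≤ n then F t else F' (t - n)
  have hL_late : ∀ t, n ≤ t → L t = F' (t - n) := by
    intro t ht
    rcases ht.eq_or_lt with rfl | ht
    · simp [L, hF1, hF'0]
    · simp [L, not_le.2 ht]
  refine homotopic_iff_exists_nat.2 ⟨n + m, L, ?_, by simp [L, hF0], fun t ht => ?_⟩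
  · intro s t hst hts
    by_cases hsn : s ≤ n ∧ t ≤ n
    · simp only [L, if_pos hsn.1, if_pos hsn.2]
      exact hF s t hst hts
    · rw [hL_late s (by omega), hL_late t (by omega)]
      exact hF' _ _ (by omega) (by omega)
  · rw [hL_late t (by omega)]
    exact hF'1 _ (by omega)

theorem Homotopic.comp_left {f g : V → W} (h : Homotopic G H f g) {p : W → U}
    (hp : IsGraphHom H K p) : Homotopic G K (p ∘ f) (p ∘ g) := by
  obtain ⟨n, F, hF, hF0, hF1⟩ := h
  exact ⟨n, p ∘ F, fun _ _ h => hp (hF h), fun a => congrArg p (hF0 a),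
    fun a => congrArg p (hF1 a)⟩

theorem Homotopic.comp_right {f g : W → U} (h : Homotopic H K f g) {p : V → W}
    (hp : IsGraphHom G H p) : Homotopic G K (f ∘ p) (g ∘ p) := by
  obtain ⟨n, F, hF, hF0, hF1⟩ := h
  exact ⟨n, fun q => F (p q.1, q.2), fun _ _ h => hF ⟨hp h.1, h.2⟩, fun _ => hF0 _,
    fun _ => hF1 _⟩

theorem homotopic_of_forall_adj {f g : V → W} (hf : IsGraphHom G H f) (hg : IsGraphHom G H g)
    (hfg : ∀ ⦃a a'⦄, G.adj a a' → H.adj (f a) (g a')) : Homotopic G H f g := by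
  refine homotopic_iff_exists_nat.2
    ⟨1, fun t => if t = 0 then f else g, ?_, rfl, fun t ht => if_neg (by omega)⟩
  intro s t _ _ a a' ha
  by_cases hs : s = 0 <;> by_cases ht : t = 0 <;> simp only [hs, ht, if_true, if_false]
  · exact hf ha
  · exact hfg ha
  · exact H.symm (hfg (G.symm ha))
  · exact hg ha

theorem isGraphHom_of_forall_adj {r : V → V} (hr : ∀ ⦃a a'⦄, G.adj a a' → G.adj (r a) a') :
    IsGraphHom G G r :=
  fun _ _ h => G.symm (hr (G.symm (hr h)))

theorem homotopic_id_of_forall_adj {r : V → V}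
    (hr : ∀ ⦃a a'⦄, G.adj a a' → G.adj (r a) a') : Homotopic G G r id :=
  homotopic_of_forall_adj (isGraphHom_of_forall_adj hr) (fun _ _ h => h) hr

theorem IsHtpyEquiv.comp {f : V → W} {g : W → U} (hf : IsHtpyEquiv G H f)
    (hg : IsHtpyEquiv H K g) : IsHtpyEquiv G K (g ∘ f) := by
  obtain ⟨hf, f', hf', hf'f, hff'⟩ := hf
  obtain ⟨hg, g', hg', hg'g, hgg'⟩ := hg
  refine ⟨fun _ _ h => hg (hf h), f' ∘ g', fun _ _ h => hf' (hg' h), ?_, ?_⟩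
  · exact ((hg'g.comp_right hf).comp_left hf').trans hf'f
  · exact ((hff'.comp_right hg').comp_left hg).trans hgg'

theorem IsHtpyEquiv.of_comp_left {φ : W → U} {g : V → W} (hφ : IsHtpyEquiv H K φ)
    (hg : IsGraphHom G H g) (h : IsHtpyEquiv G K (φ ∘ g)) : IsHtpyEquiv G H g := by
  obtain ⟨hφ, ψ, hψ, hψφ, -⟩ := hφ
  obtain ⟨-, k, hk, hkφg, hφgk⟩ := h
  refine ⟨hg, k ∘ φ, fun _ _ h => hk (hφ h), hkφg, ?_⟩
  have hgkφ : IsGraphHom H H (g ∘ k ∘ φ) := fun _ _ h => hg (hk (hφ h))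
  -- `g ∘ k ∘ φ ≃ ψ ∘ (φ ∘ g ∘ k) ∘ φ ≃ ψ ∘ φ ≃ id`
  exact (hψφ.symm.comp_right hgkφ).trans (((hφgk.comp_right hφ).comp_left hψ).trans hψφ)

theorem IsHtpyEquiv.isHtpyEquiv_comp_iff {φ : W → U} {g : V → W} (hφ : IsHtpyEquiv H K φ)
    (hg : IsGraphHom G H g) : IsHtpyEquiv G K (φ ∘ g) ↔ IsHtpyEquiv G H g :=
  ⟨hφ.of_comp_left hg, fun h => h.comp hφ⟩

end Homotopy

theorem isGraphHom_cobase {A B C : Type} (GB : LGraph B) (GC : LGraph C) (i : A → B)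
    (f : A → C) : IsGraphHom GC (pushoutGraph GB GC i f) (cobase i f) :=
  fun c c' h => ⟨Sum.inr c, Sum.inr c', rfl, rfl, Or.inr ⟨c, c', rfl, rfl, h⟩⟩

namespace Pushout

variable {A B B' C : Type} {i : A → B} {i' : A → B'} {f : A → C}

def mapLeft (r : B → B') (hr : ∀ a, r (i a) = i' a) : Pushout i f → Pushout i' f :=
  Quot.lift (fun u => Quot.mk _ (Sum.map r id u))
    (by rintro _ _ ⟨a, rfl, rfl⟩; exact Quot.sound ⟨a, by simp [hr], rfl⟩)

theorem mapLeft_mapLeft {B'' : Type} {i'' : A → B''} (r : B → B') (hr : ∀ a, r (i a) = i' a)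
    (s : B' → B'') (hs : ∀ a, s (i' a) = i'' a) (p : Pushout i f) :
    mapLeft s hs (mapLeft r hr p) = mapLeft (s ∘ r) (fun a => by simp [hr, hs]) p := by
  induction p using Quot.ind with
  | mk u => rcases u with b | c <;> rfl

theorem mapLeft_eq_self {r : B → B} (hr : ∀ a, r (i a) = i a) (h : ∀ b, r b = b)
    (p : Pushout i f) : mapLeft r hr p = p := by
  induction p using Quot.ind with
  | mk u =>
    rcases u with b | c
    · exact congrArg (fun b => Quot.mk _ (Sum.inl b)) (h b)
    · rfl

theorem isGraphHom_mapLeft {GB : LGraph B} {GB' : LGraph B'} (GC : LGraph C) {r : B → B'}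
    (hr : ∀ a, r (i a) = i' a) (hrG : IsGraphHom GB GB' r) :
    IsGraphHom (pushoutGraph GB GC i f) (pushoutGraph GB' GC i' f) (mapLeft r hr) := by
  rintro _ _ ⟨u, w, rfl, rfl, ⟨b, b', rfl, rfl, hb⟩ | ⟨c, c', rfl, rfl, hc⟩⟩
  · exact ⟨_, _, rfl, rfl, Or.inl ⟨r b, r b', rfl, rfl, hrG hb⟩⟩
  · exact ⟨_, _, rfl, rfl, Or.inr ⟨c, c', rfl, rfl, hc⟩⟩

theorem adj_mapLeft {GB : LGraph B} (GC : LGraph C) {r : B → B} (hr : ∀ a, r (i a) = i a)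
    (hadj : ∀ ⦃b b'⦄, GB.adj b b' → GB.adj (r b) b') ⦃p q : Pushout i f⦄
    (hpq : (pushoutGraph GB GC i f).adj p q) :
    (pushoutGraph GB GC i f).adj (mapLeft r hr p) q := by
  obtain ⟨u, w, rfl, rfl, ⟨b, b', rfl, rfl, hb⟩ | ⟨c, c', rfl, rfl, hc⟩⟩ := hpq
  · exact ⟨_, _, rfl, rfl, Or.inl ⟨r b, b', rfl, rfl, hadj hb⟩⟩
  · exact ⟨_, _, rfl, rfl, Or.inr ⟨c, c', rfl, rfl, hc⟩⟩

end Pushout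

section Fold

variable {B : Type} {v v'' : B}

open Classical in
noncomputable def foldVertex (hne : v'' ≠ v) (b : B) : {b : B // b ≠ v} :=
  if h : b = v then ⟨v'', hne⟩ else ⟨b, h⟩

theorem foldVertex_of_ne (hne : v'' ≠ v) {b : B} (hb : b ≠ v) : foldVertex hne b = ⟨b, hb⟩ :=
  dif_neg hb

theorem foldVertex_val (hne : v'' ≠ v) (b : {b : B // b ≠ v}) : foldVertex hne b.1 = b :=
  foldVertex_of_ne hne b.2

theorem adj_foldVertex {GB : LGraph B} (hne : v'' ≠ v) (hfold : ∀ b, GB.adj v b → GB.adj v'' b)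
    {b b' : B} (h : GB.adj b b') : GB.adj (foldVertex hne b).1 b' := by
  unfold foldVertex
  split_ifs with hb
  · exact hfold b' (hb ▸ h)
  · exact h

theorem isHtpyEquiv_mapLeft_foldVertex {A X : Type} (GB : LGraph B) (GX : LGraph X)
    (i : A → B) (α : A → X) (hv : v ∉ Set.range i) (hne : v'' ≠ v)
    (hfold : ∀ b, GB.adj v b → GB.adj v'' b) :
    IsHtpyEquiv (pushoutGraph GB GX i α)
      (pushoutGraph (GB.delete v) GX (fun a => ⟨i a, fun h => hv ⟨a, h⟩⟩) α)
      (Pushout.mapLeft (foldVertex hne) fun a => foldVertex_of_ne hne fun h => hv ⟨a, h⟩) := by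
  have hadj : ∀ ⦃b b'⦄, GB.adj b b' → GB.adj (foldVertex hne b).1 b' :=
    fun _ _ => adj_foldVertex hne hfold
  have hfoldG : IsGraphHom GB (GB.delete v) (foldVertex hne) :=
    isGraphHom_of_forall_adj (r := fun b => (foldVertex hne b).1) hadj
  refine ⟨Pushout.isGraphHom_mapLeft GX _ hfoldG, Pushout.mapLeft Subtype.val fun _ => rfl,
    Pushout.isGraphHom_mapLeft GX _ fun _ _ h => h, ?_, ?_⟩
  · refine homotopic_id_of_forall_adj fun p q hpq => ?_
    rw [Function.comp_apply, Pushout.mapLeft_mapLeft]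
    exact Pushout.adj_mapLeft GX _ hadj hpq
  · refine homotopic_id_of_forall_adj fun p q hpq => ?_
    rwa [Function.comp_apply, Pushout.mapLeft_mapLeft,
      Pushout.mapLeft_eq_self (r := foldVertex hne ∘ Subtype.val) _ (foldVertex_val hne)]

end Fold

theorem stmt13_general {A B X : Type} (GB : LGraph B) (i : A → B)
    (v : B) (hv : v ∉ Set.range i)
    (v'' : B) (hne : v'' ≠ v) (hfold : ∀ b : B, GB.adj v b → GB.adj v'' b)
    (GX : LGraph X) (α : A → X) :
    (IsHtpyEquiv GX
        (pushoutGraph (GB.delete v) GX (fun a => ⟨i a, fun h => hv ⟨a, h⟩⟩) α)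
        (cobase (fun a => (⟨i a, fun h => hv ⟨a, h⟩⟩ : {b : B // b ≠ v})) α) ↔
      IsHtpyEquiv GX (pushoutGraph GB GX i α) (cobase i α)) :=
  (isHtpyEquiv_mapLeft_foldVertex GB GX i α hv hne hfold).isHtpyEquiv_comp_iff
    (isGraphHom_cobase GB GX i α)

/-- let `i : A → B` be an induced subgraph inclusion and a ×-homotopy
equivalence, `v ∉ A` a vertex of `B` admitting a (relative) fold `B → B - v` (folding `v` to
`v'' ≠ v`), and `j : A → B - v` the induced inclusion.  For every graph map `α : A → X`,
the cobase change of `j` along `α` is a ×-homotopy equivalence iff the cobase change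
of `i` along `α` is. -/
theorem stmt13 {A B X : Type} (GA : LGraph A) (GB : LGraph B) (i : A → B)
    (hind : Function.Injective i ∧ ∀ a a' : A, GA.adj a a' ↔ GB.adj (i a) (i a'))
    (hhe : IsHtpyEquiv GA GB i)
    (v : B) (hv : v ∉ Set.range i)
    (v'' : B) (hne : v'' ≠ v) (hfold : ∀ b : B, GB.adj v b → GB.adj v'' b)
    (GX : LGraph X) (α : A → X) (hα : IsGraphHom GA GX α) :
    (IsHtpyEquiv GX
        (pushoutGraph (GB.delete v) GX (fun a => ⟨i a, fun h => hv ⟨a, h⟩⟩) α)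
        (cobase (fun a => (⟨i a, fun h => hv ⟨a, h⟩⟩ : {b : B // b ≠ v})) α) ↔
      IsHtpyEquiv GX (pushoutGraph GB GX i α) (cobase i α)) :=
  stmt13_general GB i v hv v'' hne hfold GX α
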